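/- arXiv:math/0208213 — 4 statements merged into one kernel-verified Lean document; each statement's English description precedes it below -/
import Mathlib

section
/- Let f be a completely multiplicative function taking values ±1. Then there are at least c·x integers n ≤ x with f(n) = f(n+1), for some absolute constant c > 0 and all sufficiently large x. -/
theorem stmt_0 (f : ℕ → ℤ)
    (hmul : ∀ m n : ℕ, f (m * n) = f m * f n)
    (hpm : ∀ n : ℕ, 1 ≤ n → f n = 1 ∨ f n = -1) :
    ∃ c : ℝ, 0 < c ∧ ∃ X : ℝ, ∀ x : ℝ, X ≤ x →
      c * x ≤ (((Finset.Icc 1 ⌊x⌋₊).filter (fun n => f n = f (n + 1))).card : ℝ) := by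
  -- key claim
  have key : ∀ n : ℕ, 1 ≤ n →
      f n = f (n+1) ∨ f (2*n) = f (2*n+1) ∨ f (2*n+1) = f (2*n+1+1) := by
    intro n hn
    have h2n : f (2*n) = f 2 * f n := hmul 2 n
    have h2n2 : f (2*n+1+1) = f 2 * f (n+1) := by
      have : 2*n+1+1 = 2*(n+1) := by ring
      rw [this, hmul 2 (n+1)]
    rcases hpm 2 (by norm_num) with h2 | h2 <;>
    rcases hpm n hn with ha | ha <;>
    rcases hpm (n+1) (by omega) with hb | hb <;>
    rcases hpm (2*n+1) (by omega) with hc | hc <;>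
      simp [h2, ha, hb, hc, h2n, h2n2]
  refine ⟨1/8, by norm_num, 6, fun x hx => ?_⟩
  set K := ⌊x⌋₊ with hK
  set M := (K - 1) / 2 with hM
  set g : ℕ → ℕ := fun n =>
    if f n = f (n+1) then n else if f (2*n) = f (2*n+1) then 2*n else 2*n+1 with hg
  set A := (Finset.Icc 1 K).filter (fun n => f n = f (n + 1)) with hA
  have hK6 : 6 ≤ K := Nat.le_floor (by exact_mod_cast hx)
  -- g maps Icc 1 M into A
  have hmaps : ∀ n ∈ Finset.Icc 1 M, g n ∈ A := by
    intro n hn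
    simp only [Finset.mem_Icc] at hn
    have h2M : 2*M+1 ≤ K := by omega
    have hgood : f (g n) = f (g n + 1) := by
      rcases key n hn.1 with h | h | h
      · simp [hg, h]
      · by_cases h0 : f n = f (n+1)
        · simp [hg, h0]
        · simp [hg, h0, h]
      · by_cases h0 : f n = f (n+1)
        · simp [hg, h0]
        · by_cases h1 : f (2*n) = f (2*n+1)
          · simp [hg, h0, h1]
          · simp only [hg, if_neg h0, if_neg h1]; exact h
    have hrange : 1 ≤ g n ∧ g n ≤ K := by
      have : g n = n ∨ g n = 2*n ∨ g n = 2*n+1 := by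
        simp only [hg]
        split_ifs <;> simp
      rcases this with h | h | h <;> omega
    simp [hA, Finset.mem_Icc, hrange.1, hrange.2, hgood]
  have himg : (Finset.Icc 1 M).image g ⊆ A := by
    intro b hb
    rcases Finset.mem_image.mp hb with ⟨n, hn, rfl⟩
    exact hmaps n hn
  -- fibers have size ≤ 2
  have hfib : ∀ b ∈ (Finset.Icc 1 M).image g,
      ((Finset.Icc 1 M).filter (fun n => g n = b)).card ≤ 2 := by
    intro b _
    have hsub : (Finset.Icc 1 M).filter (fun n => g n = b) ⊆ {b, b/2} := by
      intro n hn
      simp only [Finset.mem_filter] at hn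
      have hform : g n = n ∨ g n = 2*n ∨ g n = 2*n+1 := by
        simp only [hg]; split_ifs <;> simp
      have hb := hn.2
      simp only [Finset.mem_insert, Finset.mem_singleton]
      rcases hform with h | h | h <;> omega
    calc ((Finset.Icc 1 M).filter (fun n => g n = b)).card
        ≤ ({b, b/2} : Finset ℕ).card := Finset.card_le_card hsub
      _ ≤ 2 := by
          apply le_trans (Finset.card_insert_le _ _); simp
  have hcard : M ≤ 2 * ((Finset.Icc 1 M).image g).card := by
    have := Finset.card_le_mul_card_image (Finset.Icc 1 M) 2 hfib
    simpa using this
  have hMA : M ≤ 2 * A.card :=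
    le_trans hcard (by
      have := Finset.card_le_card himg
      omega)
  -- numerics
  have hKx : (x : ℝ) - 1 ≤ (K : ℝ) := by
    have := Nat.sub_one_lt_floor x
    exact_mod_cast this.le
  have hMreal : ((K : ℝ) - 2) / 2 ≤ (M : ℝ) := by
    have : K - 2 ≤ 2 * M := by omega
    have h2 : ((K : ℝ) - 2) ≤ 2 * (M : ℝ) := by
      have hK2 : (2 : ℕ) ≤ K := by omega
      have := (Nat.cast_le (α := ℝ)).mpr this
      push_cast [Nat.cast_sub hK2] at this ⊢
      linarith
    linarith
  have hAreal : (M : ℝ) ≤ 2 * (A.card : ℝ) := by exact_mod_cast hMA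
  have : (x - 3) / 4 ≤ (A.card : ℝ) := by linarith
  have hx6 : (6 : ℝ) ≤ x := hx
  calc (1/8 : ℝ) * x ≤ (x - 3) / 4 := by linarith
    _ ≤ (A.card : ℝ) := this
end

section
/- Let f be completely multiplicative with values ±1. Suppose #{m ≤ x−1 : f(m) = −f(m+1)} ≤ x / L(x)^7 where L(x) = exp((log log x)·√(log x)). Let β₁ = exp(10√(log x)), β₂ = L(x)^3, and I = [x/(2β₁), x/β₁]. Then for x sufficiently large, for any primes p, q ≤ β₁ with f(p) = f(q) and 1/2 < p/q < 2, the number of n ∈ I with f(n) = −f(⌊pn/q⌋) is less than |I| / β₂². -/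
/-!
Let `S` be the set of sign changes `m` of `f` (those with `f m = -f (m + 1)`). Write `n = q m + r`
with `0 ≤ r < q`. Since `f (p m) = f (q m)`, a flip `f n = -f ⌊p n / q⌋` forces a sign change
either between `q m` and `n` or between `p m` and `⌊p n / q⌋ < p m + p`. Hence each such `n` lies
within distance `q` of a sign change `j`, or in the block `[q ⌊j / p⌋, q ⌊j / p⌋ + q)`, so there
are at most `2 q |S| ≤ 2 β₁ x / L⁷` of them, which is far below `|I| / L⁶` as `4 β₁² < L`.
-/

open Real

lemma exists_ne_succ_of_ne {α : Type*} (g : ℕ → α) {a b : ℕ} (hab : a ≤ b) (hne : g a ≠ g b) :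
    ∃ j, a ≤ j ∧ j < b ∧ g j ≠ g (j + 1) := by
  by_contra! hconst
  have hconst_upto : ∀ n, a ≤ n → n ≤ b → g a = g n :=
    Nat.le_induction (fun _ => rfl) fun n han ih hnb =>
      (ih (by omega)).trans (hconst n han (by omega))
  exact hne (hconst_upto b hab le_rfl)

section SignChanges

variable (f : ℕ → ℤ)

def signChanges (M : ℕ) : Finset ℕ :=
  (Finset.Icc 1 M).filter (fun m => f m = -f (m + 1))

def signFlipWindow (p q j : ℕ) : Finset ℕ :=
  Finset.Ioc j (j + q) ∪ Finset.Ico (q * (j / p)) (q * (j / p) + q)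

lemma card_signFlipWindow_le (p q j : ℕ) : (signFlipWindow p q j).card ≤ 2 * q := by
  refine (Finset.card_union_le _ _).trans ?_
  rw [Nat.card_Ioc, Nat.card_Ico]
  omega

variable {f}

lemma exists_mem_signChanges_of_ne (hpm : ∀ n : ℕ, 1 ≤ n → f n = 1 ∨ f n = -1)
    {M a b : ℕ} (ha : 1 ≤ a) (hab : a ≤ b) (hbM : b ≤ M + 1) (hne : f a ≠ f b) :
    ∃ j ∈ signChanges f M, a ≤ j ∧ j < b := by
  obtain ⟨j, haj, hjb, hj⟩ := exists_ne_succ_of_ne f hab hne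
  refine ⟨j, Finset.mem_filter.mpr ⟨Finset.mem_Icc.mpr ⟨by omega, by omega⟩, ?_⟩, haj, hjb⟩
  rcases hpm j (by omega) with h | h <;> rcases hpm (j + 1) (by omega) with h' | h' <;> omega

lemma exists_mem_signFlipWindow (hpm : ∀ n : ℕ, 1 ≤ n → f n = 1 ∨ f n = -1)
    (hmul : ∀ m n : ℕ, f (m * n) = f m * f n)
    {p q M n : ℕ} (hp : 0 < p) (hq : 0 < q) (hfpq : f p = f q) (hqn : q ≤ n) (hnM : n ≤ M + 1)
    (hkM : p * n / q ≤ M + 1) (hflip : f n = -f (p * n / q)) :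
    ∃ j ∈ signChanges f M, n ∈ signFlipWindow p q j := by
  obtain ⟨m, hm_def⟩ : ∃ m, m = n / q := ⟨_, rfl⟩
  have hm : 1 ≤ m := hm_def ▸ (Nat.one_le_div_iff hq).mpr hqn
  have hqm : q * m ≤ n := hm_def ▸ Nat.mul_div_le n q
  have hnq : n < q * m + q := by
    have := Nat.lt_mul_div_succ n hq; rw [mul_add, ← hm_def] at this; omega
  by_cases hblock : f (q * m) = f n
  · have hlo : p * m ≤ p * n / q :=
      (Nat.le_div_iff_mul_le hq).mpr (by nlinarith)
    have hhi : p * n / q < p * m + p :=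
      (Nat.div_lt_iff_lt_mul hq).mpr (by nlinarith)
    have hne : f (p * m) ≠ f (p * n / q) := by
      have hpqm : f (p * m) = f (q * m) := by rw [hmul, hmul, hfpq]
      rcases hpm (p * n / q) (by nlinarith) with h | h <;> omega
    obtain ⟨j, hj, hlo', hhi'⟩ :=
      exists_mem_signChanges_of_ne hpm (by nlinarith) hlo hkM hne
    have hjp : j / p = m := Nat.div_eq_of_lt_le (by linarith) (by linarith)
    refine ⟨j, hj, Finset.mem_union_right _ (Finset.mem_Ico.mpr ?_)⟩
    rw [hjp]
    omega
  · obtain ⟨j, hj, hlo', hhi'⟩ :=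
      exists_mem_signChanges_of_ne hpm (by nlinarith) hqm hnM hblock
    exact ⟨j, hj, Finset.mem_union_left _ (Finset.mem_Ioc.mpr ⟨hhi', by omega⟩)⟩

lemma card_le_of_forall_sign_flip (hpm : ∀ n : ℕ, 1 ≤ n → f n = 1 ∨ f n = -1)
    (hmul : ∀ m n : ℕ, f (m * n) = f m * f n)
    {p q M : ℕ} (hp : 0 < p) (hq : 0 < q) (hfpq : f p = f q) (A : Finset ℕ)
    (hA : ∀ n ∈ A, q ≤ n ∧ n ≤ M + 1 ∧ p * n / q ≤ M + 1 ∧ f n = -f (p * n / q)) :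
    A.card ≤ (signChanges f M).card * (2 * q) := by
  classical
  have hcover : A ⊆ (signChanges f M).biUnion (signFlipWindow p q) := fun n hn => by
    obtain ⟨hqn, hnM, hkM, hflip⟩ := hA n hn
    obtain ⟨j, hj, hnj⟩ := exists_mem_signFlipWindow hpm hmul hp hq hfpq hqn hnM hkM hflip
    exact Finset.mem_biUnion.mpr ⟨j, hj, hnj⟩
  exact (Finset.card_le_card hcover).trans <| Finset.card_biUnion_le_card_mul _ _ _
    fun j _ => card_signFlipWindow_le p q j

end SignChanges

lemma two_mul_exp_sq_le_self {x : ℝ} (hx : 0 < x) (hlog : 441 ≤ log x) :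
    2 * exp (10 * √(log x)) ^ 2 ≤ x := by
  set s := √(log x)
  have hs : 21 ≤ s := le_sqrt_of_sq_le (by linarith)
  have hss : s ^ 2 = log x := sq_sqrt (by linarith)
  calc 2 * exp (10 * s) ^ 2 ≤ exp 1 * exp (20 * s) := by
        rw [← exp_nat_mul]; push_cast; ring_nf
        gcongr; linarith [add_one_le_exp (1 : ℝ)]
    _ ≤ exp (s ^ 2) := by rw [← exp_add]; gcongr; nlinarith
    _ = x := by rw [hss, exp_log hx]

lemma four_mul_exp_sq_lt {x : ℝ} (hlog : 1 ≤ log x) (hloglog : 30 ≤ log (log x)) :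
    4 * exp (10 * √(log x)) ^ 2 < exp (log (log x) * √(log x)) := by
  set s := √(log x)
  have hs : 1 ≤ s := one_le_sqrt.mpr hlog
  calc 4 * exp (10 * s) ^ 2 ≤ exp 3 * exp (20 * s) := by
        rw [← exp_nat_mul]; push_cast; ring_nf
        gcongr; linarith [add_one_le_exp (3 : ℝ)]
    _ < exp (log (log x) * s) := by rw [← exp_add]; gcongr; nlinarith

lemma le_floor_sub_one_add_one {x : ℝ} {k : ℕ} (hk : (k : ℝ) ≤ x) : k ≤ ⌊x - 1⌋₊ + 1 := by
  rw [Nat.floor_sub_one]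
  have := Nat.le_floor hk
  omega

lemma log_bounds_of_exp_exp_le {x : ℝ} (hx : exp (exp 30) ≤ x) :
    441 ≤ log x ∧ 30 ≤ log (log x) := by
  have hlog : exp 30 ≤ log x := by simpa using log_le_log (exp_pos _) hx
  have hexp : (30 : ℝ) ^ 2 / 2 ≤ exp 30 := by
    simpa [Nat.factorial] using pow_div_factorial_le_exp (30 : ℝ) (by norm_num) 2
  exact ⟨by linarith, by simpa using log_le_log (exp_pos _) hlog⟩

lemma bounds_of_mem_Icc_div {x β : ℝ} {p q n : ℕ} (hβ : 2 ≤ β) (hβx : 2 * β ^ 2 ≤ x)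
    (hqβ : (q : ℝ) ≤ β) (hpq : p < 2 * q) (hlo : x / (2 * β) ≤ n) (hhi : (n : ℝ) ≤ x / β) :
    q ≤ n ∧ n ≤ ⌊x - 1⌋₊ + 1 ∧ p * n / q ≤ ⌊x - 1⌋₊ + 1 := by
  have hqn : (q : ℝ) ≤ n := by
    refine hqβ.trans (le_trans ?_ hlo)
    rw [le_div_iff₀ (by positivity)]
    nlinarith
  have h2n : 2 * (n : ℝ) ≤ x := by
    have := (le_div_iff₀ (by positivity)).mp hhi
    nlinarith
  have hkn : p * n / q ≤ 2 * n := Nat.div_le_of_le_mul (by nlinarith)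
  exact ⟨by exact_mod_cast hqn, le_floor_sub_one_add_one (by linarith),
    hkn.trans (le_floor_sub_one_add_one (by exact_mod_cast h2n))⟩

theorem stmt_4 (f : ℕ → ℤ)
    (hmul : ∀ m n : ℕ, f (m * n) = f m * f n)
    (hpm : ∀ n : ℕ, 1 ≤ n → f n = 1 ∨ f n = -1) :
    ∃ X : ℝ, ∀ x : ℝ, X ≤ x →
      (((Finset.Icc 1 ⌊x - 1⌋₊).filter (fun m => f m = -f (m + 1))).card : ℝ) ≤
          x / (Real.exp (Real.log (Real.log x) * Real.sqrt (Real.log x))) ^ 7 →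
      ∀ p q : ℕ, p.Prime → q.Prime →
        (p : ℝ) ≤ Real.exp (10 * Real.sqrt (Real.log x)) →
        (q : ℝ) ≤ Real.exp (10 * Real.sqrt (Real.log x)) →
        f p = f q → 1 / 2 < (p : ℝ) / q → (p : ℝ) / q < 2 →
        (((Finset.Icc 1 ⌊x⌋₊).filter (fun n : ℕ =>
            x / (2 * Real.exp (10 * Real.sqrt (Real.log x))) ≤ (n : ℝ) ∧
            (n : ℝ) ≤ x / Real.exp (10 * Real.sqrt (Real.log x)) ∧
            f n = -f ⌊(p : ℝ) * n / q⌋₊)).card : ℝ) <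
          (x / (2 * Real.exp (10 * Real.sqrt (Real.log x)))) /
            ((Real.exp (Real.log (Real.log x) * Real.sqrt (Real.log x))) ^ 3) ^ 2 := by
  refine ⟨exp (exp 30), fun x hx hcount p q hp hq _ hqβ hfpq _ hpq => ?_⟩
  have hx0 : 0 < x := (exp_pos _).trans_le hx
  obtain ⟨hlog, hloglog⟩ := log_bounds_of_exp_exp_le hx
  set β := exp (10 * √(log x))
  set L := exp (log (log x) * √(log x))
  have hβx : 2 * β ^ 2 ≤ x := two_mul_exp_sq_le_self hx0 hlog
  have hβL : 4 * β ^ 2 < L := four_mul_exp_sq_lt (by linarith) hloglog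
  have hβ2 : 2 ≤ β := by
    have : 1 ≤ √(log x) := one_le_sqrt.mpr (by linarith)
    linarith [add_one_le_exp (10 * √(log x))]
  have hpq' : p < 2 * q := by
    exact_mod_cast (div_lt_iff₀ (by exact_mod_cast hq.pos)).mp hpq
  refine (Nat.cast_le.mpr (card_le_of_forall_sign_flip hpm hmul hp.pos hq.pos hfpq
    (M := ⌊x - 1⌋₊) _ fun n hn => ?_)).trans_lt ?_
  · obtain ⟨-, hlo, hhi, hflip⟩ := Finset.mem_filter.mp hn
    have hfloor : ⌊(p : ℝ) * n / q⌋₊ = p * n / q := by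
      rw [← Nat.cast_mul, Nat.floor_div_natCast, Nat.floor_natCast]
    obtain ⟨hqn, hnM, hkM⟩ := bounds_of_mem_Icc_div hβ2 hβx hqβ hpq' hlo hhi
    exact ⟨hqn, hnM, hkM, hfloor ▸ hflip⟩
  calc _ = ((signChanges f ⌊x - 1⌋₊).card : ℝ) * (2 * q) := by push_cast; rfl
    _ ≤ x / L ^ 7 * (2 * β) := by gcongr; exact hcount
    _ < x / L ^ 7 * (L / (2 * β)) := by
        gcongr
        rw [lt_div_iff₀ (by positivity)]
        linarith
    _ = x / (2 * β) / (L ^ 3) ^ 2 := by field_simp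
end

section
/- Let α₁, ..., α_k be positive real numbers, each in the open interval (1/2, 2), whose product α₁·α₂···α_k also lies in (1/2, 2). Then there exists a permutation σ of {1, ..., k} such that for every ℓ with 1 ≤ ℓ ≤ k, the partial product α_{σ(1)}·α_{σ(2)}···α_{σ(ℓ)} lies in (1/2, 2). -/
/-!
Greedy ordering. Keep a running product `P ∈ (a, b)` such that `P` times the product of the
factors not yet used also lies in `(a, b)`. If `P ≤ 1`, append a factor `≥ 1` if there is one
(then `P ≤ P f < f`); otherwise all remaining factors are `< 1`, so appending any factor `f`
gives `P f ≥ P · (remaining product) > a` and `P f < P`. The case `P ≥ 1` is symmetric.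
-/

open Set

section
variable {K ι : Type*} [CommRing K] [LinearOrder K] [IsStrictOrderedRing K] {a b P : K}

lemma exists_mul_mem_Ioo_of_le_one {s : Finset ι} {f : ι → K} (ha : 0 ≤ a) (hs : s.Nonempty)
    (hf : ∀ i ∈ s, f i ∈ Ioo a b) (hP : P ∈ Ioo a b) (hPs : P * ∏ i ∈ s, f i ∈ Ioo a b)
    (hP1 : P ≤ 1) : ∃ j ∈ s, P * f j ∈ Ioo a b := by
  classical
  have hP0 : 0 ≤ P := ha.trans hP.1.le
  by_cases hbig : ∃ j ∈ s, 1 ≤ f j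
  · obtain ⟨j, hj, hj1⟩ := hbig
    exact ⟨j, hj, by nlinarith [hP.1], by nlinarith [(hf j hj).2]⟩
  · push Not at hbig
    obtain ⟨j, hj⟩ := hs
    have hrest : ∏ i ∈ s.erase j, f i ≤ 1 :=
      Finset.prod_le_one (fun i hi => ha.trans (hf i (Finset.mem_of_mem_erase hi)).1.le)
        fun i hi => (hbig i (Finset.mem_of_mem_erase hi)).le
    have hfj : 0 ≤ f j := ha.trans (hf j hj).1.le
    refine ⟨j, hj, ?_, by nlinarith [hbig j hj, hP.2]⟩
    calc a < P * ∏ i ∈ s, f i := hPs.1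
      _ = P * f j * ∏ i ∈ s.erase j, f i := by rw [← Finset.mul_prod_erase s f hj, mul_assoc]
      _ ≤ P * f j := mul_le_of_le_one_right (mul_nonneg hP0 hfj) hrest

lemma exists_mul_mem_Ioo_of_one_le {s : Finset ι} {f : ι → K} (ha : 0 ≤ a) (hs : s.Nonempty)
    (hf : ∀ i ∈ s, f i ∈ Ioo a b) (hP : P ∈ Ioo a b) (hPs : P * ∏ i ∈ s, f i ∈ Ioo a b)
    (hP1 : 1 ≤ P) : ∃ j ∈ s, P * f j ∈ Ioo a b := by
  classical
  by_cases hsmall : ∃ j ∈ s, f j ≤ 1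
  · obtain ⟨j, hj, hj1⟩ := hsmall
    have hfj : 0 ≤ f j := ha.trans (hf j hj).1.le
    exact ⟨j, hj, by nlinarith [(hf j hj).1], by nlinarith [hP.2]⟩
  · push Not at hsmall
    obtain ⟨j, hj⟩ := hs
    have hrest : 1 ≤ ∏ i ∈ s.erase j, f i :=
      Finset.one_le_prod fun i hi => (hsmall i (Finset.mem_of_mem_erase hi)).le
    have hfj : 0 ≤ f j := ha.trans (hf j hj).1.le
    refine ⟨j, hj, by nlinarith [hsmall j hj, hP.1], ?_⟩
    calc P * f j ≤ P * f j * ∏ i ∈ s.erase j, f i :=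
          le_mul_of_one_le_right (mul_nonneg (by linarith) hfj) hrest
      _ = P * ∏ i ∈ s, f i := by rw [← Finset.mul_prod_erase s f hj, mul_assoc]
      _ < b := hPs.2

lemma exists_mul_mem_Ioo {s : Finset ι} {f : ι → K} (ha : 0 ≤ a) (hs : s.Nonempty)
    (hf : ∀ i ∈ s, f i ∈ Ioo a b) (hP : P ∈ Ioo a b) (hPs : P * ∏ i ∈ s, f i ∈ Ioo a b) :
    ∃ j ∈ s, P * f j ∈ Ioo a b :=
  (le_total P 1).elim (exists_mul_mem_Ioo_of_le_one ha hs hf hP hPs)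
    (exists_mul_mem_Ioo_of_one_le ha hs hf hP hPs)

theorem exists_perm_mul_partialProd_mem_Ioo (ha : 0 ≤ a) {n : ℕ} (f : Fin n → K)
    (hf : ∀ i, f i ∈ Ioo a b) (hP : P ∈ Ioo a b) (hPf : P * ∏ i, f i ∈ Ioo a b) :
    ∃ σ : Equiv.Perm (Fin n), ∀ i, P * Fin.partialProd (f ∘ σ) i ∈ Ioo a b := by
  induction n generalizing P with
  | zero => exact ⟨1, fun i => by simpa [Fin.fin_one_eq_zero i] using hP⟩
  | succ n ih =>
    obtain ⟨j, -, hj⟩ := exists_mul_mem_Ioo ha Finset.univ_nonempty (fun i _ => hf i) hP hPf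
    set g : Fin n → K := fun i => f (Equiv.swap 0 j i.succ)
    have hprod : ∏ i, f i = f j * ∏ i, g i := by
      rw [← Equiv.prod_comp (Equiv.swap 0 j) f, Fin.prod_univ_succ, Equiv.swap_apply_left]
    obtain ⟨τ, hτ⟩ := ih g (fun i => hf _) hj (by rwa [mul_assoc, ← hprod])
    refine ⟨Equiv.Perm.decomposeFin.symm (j, τ), Fin.cases (by simpa using hP) fun i => ?_⟩
    have htail : Fin.tail (f ∘ Equiv.Perm.decomposeFin.symm (j, τ)) = g ∘ τ := by
      ext i; simp [Fin.tail, g]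
    rw [Fin.partialProd_succ', htail, ← mul_assoc]
    simpa using hτ i

end

lemma Fin.partialProd_succ_eq_prod_filter_le {M : Type*} [CommMonoid M] {n : ℕ} (f : Fin n → M)
    (j : Fin n) : Fin.partialProd f j.succ = ∏ i with i ≤ j, f i := by
  rw [Fin.partialProd, List.prod_take_ofFn]
  refine Finset.prod_congr (Finset.filter_congr fun i _ => ?_) fun _ _ => rfl
  rw [Fin.val_succ, Nat.lt_succ_iff, Fin.le_def]

theorem stmt_5 (k : ℕ) (α : Fin k → ℝ)
    (hα : ∀ i, α i ∈ Set.Ioo (1 / 2 : ℝ) 2)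
    (hprod : (∏ i, α i) ∈ Set.Ioo (1 / 2 : ℝ) 2) :
    ∃ σ : Equiv.Perm (Fin k), ∀ ℓ : Fin k,
      (∏ i ∈ Finset.univ.filter (fun i => i ≤ ℓ), α (σ i)) ∈ Set.Ioo (1 / 2 : ℝ) 2 := by
  obtain ⟨σ, hσ⟩ := exists_perm_mul_partialProd_mem_Ioo (by norm_num) α hα
    (by norm_num : (1 : ℝ) ∈ Ioo (1 / 2) 2) (by rwa [one_mul])
  refine ⟨σ, fun ℓ => ?_⟩
  simpa [Fin.partialProd_succ_eq_prod_filter_le] using hσ ℓ.succ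
end

section
/- Let f: ℕ → {−1,1}, let I be a finite set of positive integers, and let 0 < u₀ < u₁. Then ∫_{u₀}^{u₁} #{n ∈ I : f(n) = −f(⌊tn⌋)} dt ≤ ∑_{n ∈ I} (1/n)·#{m : u₀n ≤ m ≤ u₁n, f(m) = −f(n)} + ∑_{n∈I} 2/n. -/
/-!
Writing the count as a sum of indicators, the integral becomes
`∑ n ∈ I, |{t ∈ (u₀, u₁] : f ⌊t n⌋ = -f n}|`. For fixed `n` this set is covered by the intervals
`[m/n, (m+1)/n)` with `⌊u₀ n⌋ ≤ m ≤ ⌊u₁ n⌋` and `f m = -f n`, each of length `1/n`; of these,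
only `m = ⌊u₀ n⌋` may lie below `⌈u₀ n⌉`, which costs at most one more `1/n`.
-/

open MeasureTheory Finset

theorem integral_card_filter_eq_sum_measureReal {α ι : Type*} [MeasurableSpace α]
    (μ : Measure α) [IsFiniteMeasure μ] (I : Finset ι) (P : ι → α → Prop)
    [∀ i x, Decidable (P i x)] (hP : ∀ i ∈ I, MeasurableSet {x | P i x}) :
    ∫ x, (#{i ∈ I | P i x} : ℝ) ∂μ = ∑ i ∈ I, μ.real {x | P i x} := by
  have h_indicator (x : α) :
      (#{i ∈ I | P i x} : ℝ) = ∑ i ∈ I, {x | P i x}.indicator 1 x := by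
    rw [card_filter]
    push_cast
    exact sum_congr rfl fun i _ => by simp [Set.indicator_apply]
  simp_rw [h_indicator]
  rw [integral_finsetSum _ fun i hi => (integrable_const 1).indicator (hP i hi)]
  exact sum_congr rfl fun i hi => integral_indicator_one (hP i hi)

theorem mem_Ico_floor_mul_div {t n : ℝ} (hn : 0 < n) (ht : 0 ≤ t) :
    t ∈ Set.Ico (⌊t * n⌋₊ / n) ((⌊t * n⌋₊ + 1) / n) := by
  rw [Set.mem_Ico, div_le_iff₀ hn, lt_div_iff₀ hn]
  exact ⟨Nat.floor_le (by positivity), Nat.lt_floor_add_one _⟩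

theorem measureReal_Ioc_inter_floor_mul_le {n : ℕ} (hn : 0 < n) {a b : ℝ} (ha : 0 ≤ a)
    (p : ℕ → Prop) [DecidablePred p] :
    volume.real (Set.Ioc a b ∩ {t | p ⌊t * n⌋₊}) ≤ #{m ∈ Icc ⌊a * n⌋₊ ⌊b * n⌋₊ | p m} / n := by
  set T := {m ∈ Icc ⌊a * n⌋₊ ⌊b * n⌋₊ | p m}
  have hn' : (0 : ℝ) < n := by exact_mod_cast hn
  have h_cover : Set.Ioc a b ∩ {t | p ⌊t * n⌋₊} ⊆
      ⋃ m ∈ T, Set.Ico ((m : ℝ) / n) ((m + 1) / n) := by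
    rintro t ⟨⟨hat, htb⟩, hpt⟩
    refine Set.mem_biUnion (x := ⌊t * n⌋₊) ?_ (mem_Ico_floor_mul_div hn' (ha.trans hat.le))
    exact mem_filter.2
      ⟨mem_Icc.2 ⟨Nat.floor_le_floor (by gcongr), Nat.floor_le_floor (by gcongr)⟩, hpt⟩
  have h_piece (m : ℕ) : volume.real (Set.Ico ((m : ℝ) / n) ((m + 1) / n)) = 1 / n := by
    rw [Real.volume_real_Ico_of_le (by gcongr; linarith)]
    ring
  calc volume.real (Set.Ioc a b ∩ {t | p ⌊t * n⌋₊})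
      ≤ volume.real (⋃ m ∈ T, Set.Ico ((m : ℝ) / n) ((m + 1) / n)) :=
        measureReal_mono h_cover (measure_biUnion_lt_top T.finite_toSet
          fun _ _ => measure_Ico_lt_top).ne
    _ ≤ ∑ m ∈ T, volume.real (Set.Ico ((m : ℝ) / n) ((m + 1) / n)) :=
        measureReal_biUnion_finset_le _ _
    _ = #T / n := by
        rw [sum_congr rfl fun m _ => h_piece m, sum_const, nsmul_eq_mul, mul_one_div]

theorem Nat.card_filter_Icc_floor_le {R : Type*} [Semiring R] [LinearOrder R]
    [IsStrictOrderedRing R] [FloorSemiring R] (x : R) (y : ℕ) (p : ℕ → Prop) [DecidablePred p] :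
    #{m ∈ Icc ⌊x⌋₊ y | p m} ≤ #{m ∈ Icc ⌈x⌉₊ y | p m} + 1 := by
  refine (card_le_card fun m hm => ?_).trans (card_insert_le ⌊x⌋₊ _)
  simp only [mem_filter, mem_Icc] at hm
  rw [mem_insert, mem_filter, mem_Icc]
  rcases hm.1.1.eq_or_lt with h | h
  · exact .inl h.symm
  · exact .inr ⟨⟨(Nat.ceil_le_floor_add_one x).trans h, hm.1.2⟩, hm.2⟩

theorem stmt_15_general (f : ℕ → ℤ)
    (I : Finset ℕ) (hI : ∀ n ∈ I, 1 ≤ n) (u₀ u₁ : ℝ) (hu₀ : 0 < u₀) (hu : u₀ < u₁) :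
    (∫ t in u₀..u₁, ((I.filter (fun n => f n = -f ⌊t * n⌋₊)).card : ℝ)) ≤
      (∑ n ∈ I, (1 / (n : ℝ)) *
        ((Finset.Icc ⌈u₀ * n⌉₊ ⌊u₁ * n⌋₊).filter (fun m => f m = -f n)).card) +
      ∑ n ∈ I, 2 / (n : ℝ) := by
  have h_meas (n : ℕ) : MeasurableSet {t : ℝ | f n = -f ⌊t * n⌋₊} :=
    (Nat.measurable_floor.comp (measurable_id.mul_const (n : ℝ)))
      (.of_discrete : MeasurableSet {m : ℕ | f n = -f m})
  rw [intervalIntegral.integral_of_le hu.le,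
    integral_card_filter_eq_sum_measureReal _ I _ fun n _ => h_meas n, ← sum_add_distrib]
  refine sum_le_sum fun n hn => ?_
  have h_set : {t : ℝ | f n = -f ⌊t * n⌋₊} = {t : ℝ | f ⌊t * n⌋₊ = -f n} :=
    Set.ext fun _ => Int.eq_neg_comm
  have h_card := Nat.card_filter_Icc_floor_le (u₀ * n) ⌊u₁ * n⌋₊ fun m => f m = -f n
  calc (volume.restrict (Set.Ioc u₀ u₁)).real {t : ℝ | f n = -f ⌊t * n⌋₊}
      ≤ #{m ∈ Icc ⌊u₀ * n⌋₊ ⌊u₁ * n⌋₊ | f m = -f n} / n := by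
        rw [measureReal_restrict_apply (h_meas n), Set.inter_comm, h_set]
        exact measureReal_Ioc_inter_floor_mul_le (b := u₁) (hI n hn) hu₀.le
          (fun m => f m = -f n)
    _ ≤ (#{m ∈ Icc ⌈u₀ * n⌉₊ ⌊u₁ * n⌋₊ | f m = -f n} + 1) / n := by
        gcongr
        exact_mod_cast h_card
    _ ≤ _ := by
        rw [add_div, one_div_mul_eq_div]
        gcongr
        norm_num

theorem stmt_15 (f : ℕ → ℤ) (hpm : ∀ n : ℕ, 1 ≤ n → f n = 1 ∨ f n = -1)
    (I : Finset ℕ) (hI : ∀ n ∈ I, 1 ≤ n) (u₀ u₁ : ℝ) (hu₀ : 0 < u₀) (hu : u₀ < u₁) :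
    (∫ t in u₀..u₁, ((I.filter (fun n => f n = -f ⌊t * n⌋₊)).card : ℝ)) ≤
      (∑ n ∈ I, (1 / (n : ℝ)) *
        ((Finset.Icc ⌈u₀ * n⌉₊ ⌊u₁ * n⌋₊).filter (fun m => f m = -f n)).card) +
      ∑ n ∈ I, 2 / (n : ℝ) :=
  stmt_15_general f I hI u₀ u₁ hu₀ hu
end
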